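/- arXiv:math/0310317 — 4 statements merged into one kernel-verified Lean document; each statement's English description precedes it below -/
import Mathlib

section
/- If a word u in the language L(ζ) appears for the first time in B(n₀,k₀) — meaning u is an infix of B(n₀,k₀) but u is not an infix of any B(n,k) with (n,k) ≠ (n₀,k₀), k ≤ k₀ and n−k ≤ n₀−k₀ — then u occurs at most twice in B(n₀,k₀): the number of occurrences a(u, B(n₀,k₀)) equals 1 or 2. -/
/-- The basic blocks of the Pascal triangle of words (`a = false`, `b = true`):
`B(n,0) = a`, `B(n,n) = b`, and `B(n,k) = B(n−1,k) ++ B(n−1,k−1)` for `0 < k < n`. -/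
def Bblk : ℕ → ℕ → List Bool
  | 0, _ => [true]
  | _ + 1, 0 => [false]
  | n + 1, k + 1 => if k + 1 = n + 1 then [true] else Bblk n (k + 1) ++ Bblk n k

/-- The number of occurrences of `u` in `w`. -/
def occ (u w : List Bool) : ℕ :=
  ((Finset.range (w.length - u.length + 1)).filter
    (fun i => (w.drop i).take u.length = u)).card

namespace FirstApp

/-- Total indexing function. -/
def g (w : List Bool) (i : ℕ) : Bool := w.getD i false

/-- `u` matches inside `w` at position `i`. -/
def M (u w : List Bool) (i : ℕ) : Prop :=
  i + u.length ≤ w.length ∧ ∀ t, t < u.length → g w (i + t) = g u t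

/-- A run of `r` `false`s occurs in `w` at position `s`. -/
def MA (w : List Bool) (s r : ℕ) : Prop :=
  s + r ≤ w.length ∧ ∀ t, t < r → g w (s + t) = false

lemma g_append_left (L R : List Bool) {i : ℕ} (h : i < L.length) : g (L ++ R) i = g L i :=
  List.getD_append _ _ _ _ h

lemma g_append_right (L R : List Bool) {i : ℕ} (h : L.length ≤ i) :
    g (L ++ R) i = g R (i - L.length) :=
  List.getD_append_right _ _ _ _ h

lemma g_eq_getElem {w : List Bool} {i : ℕ} (h : i < w.length) : g w i = w[i] :=
  List.getD_eq_getElem _ _ h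

lemma g_cons_zero (a : Bool) (l : List Bool) : g (a :: l) 0 = a := rfl

lemma g_cons_succ (a : Bool) (l : List Bool) (i : ℕ) : g (a :: l) (i + 1) = g l i := by
  simp [g, List.getD]

lemma g_replicate (r t : ℕ) : g (List.replicate r false) t = false := by
  induction r generalizing t with
  | zero => cases t <;> rfl
  | succ r ih =>
    cases t with
    | zero => rfl
    | succ t => rw [List.replicate_succ, g_cons_succ]; exact ih t

lemma Bblk_diag (n : ℕ) : Bblk n n = [true] := by
  cases n with
  | zero => rfl
  | succ n => simp [Bblk]

lemma Bblk_zero (n : ℕ) : Bblk (n + 1) 0 = [false] := rfl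

lemma Bblk_split (n k : ℕ) (h : k ≠ n) :
    Bblk (n + 1) (k + 1) = Bblk n (k + 1) ++ Bblk n k := by
  have : k + 1 ≠ n + 1 := by omega
  simp [Bblk, this, h]

lemma len_pos (n k : ℕ) : 0 < (Bblk n k).length := by
  induction n generalizing k with
  | zero => simp [Bblk]
  | succ n ih =>
    cases k with
    | zero => simp [Bblk]
    | succ k =>
      by_cases h : k = n
      · subst h; rw [show k + 1 = k + 1 from rfl]
        have : Bblk (k + 1) (k + 1) = [true] := Bblk_diag (k + 1)
        rw [this]; simp
      · rw [Bblk_split n k h]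
        simp only [List.length_append]
        have := ih (k + 1)
        omega

lemma Bblk_one (m : ℕ) : Bblk (m + 1) 1 = true :: List.replicate m false := by
  induction m with
  | zero => rfl
  | succ m ih =>
    rw [show (1 : ℕ) = 0 + 1 from rfl, Bblk_split (m + 1) 0 (by omega)]
    rw [show (0 : ℕ) + 1 = 1 from rfl, ih, Bblk_zero]
    simp [List.replicate_succ']

lemma Bblk_top (m : ℕ) : Bblk (m + 1) m = List.replicate m true ++ [false] := by
  induction m with
  | zero => rfl
  | succ m ih =>
    rw [Bblk_split (m + 1) m (by omega), Bblk_diag, ih]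
    simp [List.replicate_succ]

lemma head_true (m j : ℕ) (h1 : 1 ≤ j) (h2 : j ≤ m) : g (Bblk m j) 0 = true := by
  induction m generalizing j with
  | zero => omega
  | succ m ih =>
    rcases eq_or_lt_of_le h2 with he | hlt
    · rw [he, Bblk_diag]; rfl
    · obtain ⟨j', rfl⟩ : ∃ j', j = j' + 1 := ⟨j - 1, by omega⟩
      rw [Bblk_split m j' (by omega)]
      rw [g_append_left _ _ (len_pos m (j' + 1))]
      exact ih (j' + 1) (by omega) (by omega)

lemma suffix_ba (m j : ℕ) (h1 : 1 ≤ j) (h2 : j + 1 ≤ m) :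
    ∃ s, Bblk m j = s ++ (true :: List.replicate (m - j) false) := by
  induction m generalizing j with
  | zero => omega
  | succ m ih =>
    rcases eq_or_lt_of_le h1 with he | hlt
    · refine ⟨[], ?_⟩
      rw [← he, Bblk_one]
      simp
    · obtain ⟨j', rfl⟩ : ∃ j', j = j' + 1 := ⟨j - 1, by omega⟩
      obtain ⟨s, hs⟩ := ih j' (by omega) (by omega)
      refine ⟨Bblk m (j' + 1) ++ s, ?_⟩
      rw [show m + 1 - (j' + 1) = m - j' by omega]
      rw [Bblk_split m j' (by omega), hs, List.append_assoc]

lemma len_ge (m j : ℕ) (h1 : 1 ≤ j) (h2 : j + 1 ≤ m) :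
    (m - j) + 1 ≤ (Bblk m j).length := by
  obtain ⟨s, hs⟩ := suffix_ba m j h1 h2
  rw [hs]
  simp only [List.length_append, List.length_cons, List.length_replicate]
  omega

lemma g_last_run (m j : ℕ) (h1 : 1 ≤ j) (h2 : j + 1 ≤ m) :
    ∀ t, t < m - j → g (Bblk m j) ((Bblk m j).length - (m - j) + t) = false := by
  intro t ht
  obtain ⟨s, hs⟩ := suffix_ba m j h1 h2
  have hlen : (Bblk m j).length = s.length + (m - j) + 1 := by
    rw [hs]
    simp only [List.length_append, List.length_cons, List.length_replicate]
    omega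
  have hidx : (Bblk m j).length - (m - j) + t = s.length + (t + 1) := by omega
  rw [hidx]
  conv_lhs => rw [hs]
  rw [g_append_right _ _ (by omega)]
  rw [show s.length + (t + 1) - s.length = t + 1 by omega]
  rw [g_cons_succ]
  exact g_replicate _ _

lemma run_unique (m j : ℕ) (h1 : 1 ≤ j) (h2 : j + 1 ≤ m) :
    ∀ s, MA (Bblk m j) s (m - j) → s = (Bblk m j).length - (m - j) := by
  induction m generalizing j with
  | zero => omega
  | succ m ih =>
    intro s hMA
    obtain ⟨hb, hv⟩ := hMA
    rcases eq_or_lt_of_le h1 with he | hj1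
    · -- j = 1
      have hj : j = 1 := he.symm
      subst hj
      rw [Bblk_one] at hb hv ⊢
      have hr : 1 ≤ m := by omega
      have hlen : (true :: List.replicate m false).length = m + 1 := by simp
      rcases Nat.eq_zero_or_pos s with hs0 | hs1
      · exfalso
        have hv0 := hv 0 (by omega)
        rw [hs0] at hv0
        rw [show (0 : ℕ) + 0 = 0 from rfl, g_cons_zero] at hv0
        exact absurd hv0 (by simp)
      · rw [hlen] at hb ⊢
        omega
    · rcases eq_or_lt_of_le h2 with he2 | hj2
      · -- j = m, top case
        have hj : j = m := by omega
        rw [hj] at hb hv ⊢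
        rw [Bblk_top] at hb hv ⊢
        have hlen : (List.replicate m true ++ [false]).length = m + 1 := by simp
        have h0 := hv 0 (by omega)
        rw [Nat.add_zero] at h0
        rw [hlen] at hb ⊢
        by_contra hne
        have hsm : s < m := by omega
        rw [g_append_left _ _ (by simpa using hsm)] at h0
        rw [g_eq_getElem (by simpa using hsm)] at h0
        simp at h0
      · -- 2 ≤ j, j + 1 ≤ m
        obtain ⟨j', rfl⟩ : ∃ j', j = j' + 1 := ⟨j - 1, by omega⟩
        have hsplit := Bblk_split m j' (by omega)
        have hr : (m + 1) - (j' + 1) = m - j' := by omega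
        rw [hr] at hb hv ⊢
        rw [hsplit] at hb hv ⊢
        rw [List.length_append] at hb ⊢
        have hlenX := len_ge m (j' + 1) (by omega) (by omega)
        have hlenY := len_ge m j' (by omega) (by omega)
        rcases le_or_gt (s + (m - j')) (Bblk m (j' + 1)).length with hin | hout
        · -- inside X : contradiction
          exfalso
          have hMAX : MA (Bblk m (j' + 1)) s (m - (j' + 1)) := by
            refine ⟨by omega, fun t ht => ?_⟩
            have hvt := hv t (by omega)
            rwa [g_append_left _ _ (by omega)] at hvt
          have := ih (j' + 1) (by omega) (by omega) s hMAX
          omega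
        · rcases le_or_gt (Bblk m (j' + 1)).length s with hright | hcross
          · -- inside Y
            have hMAY : MA (Bblk m j') (s - (Bblk m (j' + 1)).length) (m - j') := by
              refine ⟨by omega, fun t ht => ?_⟩
              have hvt := hv t ht
              rw [g_append_right _ _ (by omega)] at hvt
              rwa [show s + t - (Bblk m (j' + 1)).length
                  = s - (Bblk m (j' + 1)).length + t by omega] at hvt
            have := ih j' (by omega) (by omega) _ hMAY
            omega
          · -- crossing : position X.length is true
            exfalso
            have hvt := hv ((Bblk m (j' + 1)).length - s) (by omega)
            rw [show s + ((Bblk m (j' + 1)).length - s)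
                = (Bblk m (j' + 1)).length by omega] at hvt
            rw [g_append_right _ _ (le_refl _), Nat.sub_self] at hvt
            have hh := head_true m j' (by omega) (by omega)
            rw [hh] at hvt
            exact absurd hvt (by simp)

lemma unbordered (m j : ℕ) (h1 : 1 ≤ j) (h2 : j + 1 ≤ m) (p : ℕ) (hp1 : 1 ≤ p)
    (hp2 : p < (Bblk m j).length) :
    ¬ (∀ t, t < p → g (Bblk m j) ((Bblk m j).length - p + t) = g (Bblk m j) t) := by
  intro hbord
  have hrc : (m - j) + 1 ≤ (Bblk m j).length := len_ge m j h1 h2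
  have hr1 : 1 ≤ m - j := by omega
  rcases le_or_gt p (m - j) with hpr | hrp
  · -- p ≤ r : position c - p is in the final run but equals C[0] = true
    have h0 := hbord 0 (by omega)
    rw [Nat.add_zero] at h0
    have htrue : g (Bblk m j) 0 = true := head_true m j h1 (by omega)
    have hfalse : g (Bblk m j) ((Bblk m j).length - p) = false := by
      have := g_last_run m j h1 h2 ((m - j) - p) (by omega)
      rwa [show (Bblk m j).length - (m - j) + ((m - j) - p)
          = (Bblk m j).length - p by omega] at this
    rw [htrue, hfalse] at h0
    exact absurd h0 (by simp)
  · -- r < p : a run of r falses at position p - r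
    have hMA : MA (Bblk m j) (p - (m - j)) (m - j) := by
      refine ⟨by omega, fun t ht => ?_⟩
      have hb := hbord (p - (m - j) + t) (by omega)
      rw [show (Bblk m j).length - p + (p - (m - j) + t)
          = (Bblk m j).length - (m - j) + t by omega] at hb
      have hlr := g_last_run m j h1 h2 t ht
      rw [hlr] at hb
      exact hb.symm
    have := run_unique m j h1 h2 (p - (m - j)) hMA
    omega

lemma occ_in_next (m j : ℕ) (h1 : 1 ≤ j) (h2 : j + 1 ≤ m) :
    ∀ s, M (Bblk m j) (Bblk (m + 1) (j + 1)) s → s = (Bblk m (j + 1)).length := by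
  intro s hM
  have hsplit := Bblk_split m j (by omega)
  have hrc : (m - j) + 1 ≤ (Bblk m j).length := len_ge m j h1 h2
  obtain ⟨hb, hv⟩ := hM
  rw [hsplit] at hb hv
  rw [List.length_append] at hb
  have hsA : s ≤ (Bblk m (j + 1)).length := by omega
  rcases eq_or_lt_of_le hsA with he | hlt
  · exact he
  exfalso
  rcases le_or_gt (s + (Bblk m j).length) (Bblk m (j + 1)).length with hin | hcross
  · -- C entirely inside A
    rcases eq_or_lt_of_le h2 with he2 | hj2
    · -- j + 1 = m : A = [true]
      have hA : Bblk m (j + 1) = [true] := by rw [← he2]; exact Bblk_diag (j + 1)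
      rw [hA] at hin
      simp only [List.length_cons, List.length_nil] at hin
      omega
    · have hMA : MA (Bblk m (j + 1)) (s + ((Bblk m j).length - (m - j))) (m - (j + 1)) := by
        refine ⟨by omega, fun t ht => ?_⟩
        have hvt := hv ((Bblk m j).length - (m - j) + t) (by omega)
        rw [g_append_left _ _ (by omega)] at hvt
        rw [show s + ((Bblk m j).length - (m - j) + t)
            = s + ((Bblk m j).length - (m - j)) + t by omega] at hvt
        rw [hvt]
        exact g_last_run m j h1 h2 t (by omega)
      have hlenA := len_ge m (j + 1) (by omega) (by omega)
      have := run_unique m (j + 1) (by omega) (by omega) _ hMA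
      omega
  · -- crossing: border of C of length s + c - A.length
    have hp1 : 1 ≤ s + (Bblk m j).length - (Bblk m (j + 1)).length := by omega
    have hp2 : s + (Bblk m j).length - (Bblk m (j + 1)).length < (Bblk m j).length := by omega
    refine unbordered m j h1 h2 _ hp1 hp2 (fun t ht => ?_)
    have hL := hv ((Bblk m (j + 1)).length - s + t) (by omega)
    rw [show s + ((Bblk m (j + 1)).length - s + t)
        = (Bblk m (j + 1)).length + t by omega] at hL
    rw [g_append_right _ _ (by omega)] at hL
    rw [show (Bblk m (j + 1)).length + t - (Bblk m (j + 1)).length = t by omega] at hL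
    rw [show (Bblk m j).length - (s + (Bblk m j).length - (Bblk m (j + 1)).length) + t
        = (Bblk m (j + 1)).length - s + t by omega]
    exact hL.symm

lemma sync_shift (m j : ℕ) (h1 : 1 ≤ j) (h2 : j + 1 ≤ m) (p : ℕ) (hp1 : 1 ≤ p)
    (hp2 : p + 1 ≤ (Bblk (m + 1) (j + 1)).length)
    (hsync : ∀ t, t < p →
      g (Bblk (m + 1) (j + 1)) ((Bblk (m + 1) (j + 1)).length - p + t) = g (Bblk (m + 1) j) t) :
    p = (Bblk m j).length := by
  have hsplitL := Bblk_split m j (by omega)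
  obtain ⟨j', rfl⟩ : ∃ j', j = j' + 1 := ⟨j - 1, by omega⟩
  have hsplitR := Bblk_split m j' (by omega)
  have hlenL : (Bblk (m + 1) (j' + 1 + 1)).length
      = (Bblk m (j' + 1 + 1)).length + (Bblk m (j' + 1)).length := by
    rw [hsplitL, List.length_append]
  rcases lt_trichotomy p (Bblk m (j' + 1)).length with hlt | he | hgt
  · -- p < c : border of C
    exfalso
    refine unbordered m (j' + 1) h1 h2 p hp1 hlt (fun t ht => ?_)
    have hs := hsync t ht
    rw [show (Bblk (m + 1) (j' + 1 + 1)).length - p + t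
        = (Bblk m (j' + 1 + 1)).length + ((Bblk m (j' + 1)).length - p + t) by omega] at hs
    rw [hsplitL] at hs
    rw [g_append_right _ _ (by omega)] at hs
    rw [show (Bblk m (j' + 1 + 1)).length + ((Bblk m (j' + 1)).length - p + t)
        - (Bblk m (j' + 1 + 1)).length = (Bblk m (j' + 1)).length - p + t by omega] at hs
    rw [hsplitR] at hs
    rw [g_append_left _ _ (by omega)] at hs
    exact hs
  · exact he
  · -- p > c : occurrence of C in L not at the end
    exfalso
    have hM : M (Bblk m (j' + 1)) (Bblk (m + 1) (j' + 1 + 1)) ((Bblk (m + 1) (j' + 1 + 1)).length - p) := by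
      refine ⟨by omega, fun t ht => ?_⟩
      have hs := hsync t (by omega)
      rw [hsplitR] at hs
      rw [g_append_left _ _ (by omega)] at hs
      exact hs
    have := occ_in_next m (j' + 1) h1 h2 _ hM
    omega

/- Bridging between `M`, infix, and the `occ` filter. -/

lemma M_take_drop {u w : List Bool} {i : ℕ} (h : M u w i) :
    (w.drop i).take u.length = u := by
  apply List.ext_getElem?
  intro t
  rcases lt_or_ge t u.length with ht | ht
  · rw [List.getElem?_take, if_pos ht, List.getElem?_drop]
    have hiw : i + t < w.length := by have := h.1; omega
    rw [List.getElem?_eq_getElem hiw, List.getElem?_eq_getElem ht]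
    have hgt := h.2 t ht
    rw [g_eq_getElem hiw, g_eq_getElem ht] at hgt
    rw [hgt]
  · rw [List.getElem?_take, if_neg (by omega), List.getElem?_eq_none ht]

lemma take_drop_M {u w : List Bool} {i : ℕ} (hle : i + u.length ≤ w.length)
    (h : (w.drop i).take u.length = u) : M u w i := by
  refine ⟨hle, fun t ht => ?_⟩
  have hiw : i + t < w.length := by omega
  have hq : ((w.drop i).take u.length)[t]? = u[t]? := by rw [h]
  rw [List.getElem?_take, if_pos ht, List.getElem?_drop] at hq
  rw [List.getElem?_eq_getElem hiw, List.getElem?_eq_getElem ht] at hq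
  rw [g_eq_getElem hiw, g_eq_getElem ht]
  exact Option.some.inj hq

lemma infix_iff_M {u w : List Bool} : u <:+: w ↔ ∃ i, M u w i := by
  constructor
  · rintro ⟨s, t, rfl⟩
    refine ⟨s.length, ⟨by simp, fun t' ht' => ?_⟩⟩
    rw [List.append_assoc, g_append_right _ _ (by omega)]
    rw [show s.length + t' - s.length = t' by omega]
    rw [g_append_left _ _ (by omega)]
  · rintro ⟨i, hM⟩
    refine ⟨w.take i, w.drop (i + u.length), ?_⟩
    have h1 := M_take_drop hM
    calc w.take i ++ u ++ w.drop (i + u.length)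
        = w.take i ++ ((w.drop i).take u.length ++ (w.drop i).drop u.length) := by
          rw [h1, List.drop_drop, List.append_assoc]
      _ = w := by rw [List.take_append_drop, List.take_append_drop]

lemma mem_occ_iff {u w : List Bool} {i : ℕ} :
    i ∈ (Finset.range (w.length - u.length + 1)).filter
      (fun i => (w.drop i).take u.length = u) ↔ M u w i := by
  rw [Finset.mem_filter, Finset.mem_range]
  constructor
  · rintro ⟨hr, ht⟩
    have hlen : ((w.drop i).take u.length).length = u.length := by rw [ht]
    simp only [List.length_take, List.length_drop] at hlen
    have hle : i + u.length ≤ w.length := by omega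
    exact take_drop_M hle ht
  · intro hM
    exact ⟨by have := hM.1; omega, M_take_drop hM⟩

lemma M_append_left {u L R : List Bool} {i : ℕ} (h : M u (L ++ R) i)
    (hle : i + u.length ≤ L.length) : M u L i := by
  refine ⟨hle, fun t ht => ?_⟩
  have hgt := h.2 t ht
  rwa [g_append_left _ _ (by omega)] at hgt

lemma M_append_right {u L R : List Bool} {i : ℕ} (h : M u (L ++ R) i)
    (hle : L.length ≤ i) : M u R (i - L.length) := by
  have hb := h.1
  rw [List.length_append] at hb
  refine ⟨by omega, fun t ht => ?_⟩
  have hgt := h.2 t ht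
  rw [g_append_right _ _ (by omega)] at hgt
  rwa [show i + t - L.length = i - L.length + t by omega] at hgt

/-- Main combinatorial lemma: two occurrences of a word that is new at `B(N+1,j+1)`
differ by a fixed positive constant. -/
lemma two_occ (N j : ℕ) (hjN : j + 1 ≤ N) (u : List Bool)
    (hLnot : ¬ u <:+: Bblk N (j + 1)) (hRnot : ¬ u <:+: Bblk N j) :
    ∃ c, 1 ≤ c ∧ ∀ i i', M u (Bblk (N + 1) (j + 1)) i → M u (Bblk (N + 1) (j + 1)) i' →
      i < i' → i' = i + c := by
  obtain ⟨m, rfl⟩ : ∃ m, N = m + 1 := ⟨N - 1, by omega⟩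
  have hsplit := Bblk_split (m + 1) j (by omega)
  have hwlen : (Bblk (m + 1 + 1) (j + 1)).length
      = (Bblk (m + 1) (j + 1)).length + (Bblk (m + 1) j).length := by
    rw [hsplit, List.length_append]
  -- every occurrence crosses the cut
  have hcross : ∀ i, M u (Bblk (m + 1 + 1) (j + 1)) i →
      i + 1 ≤ (Bblk (m + 1) (j + 1)).length ∧
      (Bblk (m + 1) (j + 1)).length + 1 ≤ i + u.length := by
    intro i hM
    rw [hsplit] at hM
    constructor
    · by_contra hc
      push_neg at hc
      exact hRnot (infix_iff_M.2 ⟨_, M_append_right hM (by omega)⟩)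
    · by_contra hc
      push_neg at hc
      exact hLnot (infix_iff_M.2 ⟨_, M_append_left hM (by omega)⟩)
  rcases Nat.eq_zero_or_pos j with hj0 | hj1
  · -- j = 0 : R = [false], unique occurrence
    refine ⟨1, le_refl 1, fun i i' hMi hMi' hlt => ?_⟩
    exfalso
    subst hj0
    have hRlen : (Bblk (m + 1) 0).length = 1 := by rw [Bblk_zero]; rfl
    have h1 := (hcross i hMi).2
    have h2 := hMi'.1
    rw [hwlen, hRlen] at h2
    omega
  · rcases eq_or_lt_of_le hjN with he | hjlt
    · -- j + 1 = N : L = [true], unique occurrence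
      refine ⟨1, le_refl 1, fun i i' hMi hMi' hlt => ?_⟩
      exfalso
      have hLlen : (Bblk (m + 1) (j + 1)).length = 1 := by rw [he, Bblk_diag]; rfl
      have h1 := (hcross i hMi).1
      have h2 := (hcross i' hMi').1
      omega
    · -- main case
      refine ⟨(Bblk m j).length, len_pos m j, fun i i' hMi hMi' hlt => ?_⟩
      have hc1 := hcross i hMi
      have hc2 := hcross i' hMi'
      have hp1 : 1 ≤ i' - i := by omega
      have hp2 : (i' - i) + 1 ≤ (Bblk (m + 1) (j + 1)).length := by omega
      have hu2 : i' - i < u.length := by omega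
      have key : ∀ t, t < i' - i →
          g (Bblk (m + 1) (j + 1)) ((Bblk (m + 1) (j + 1)).length - (i' - i) + t)
          = g (Bblk (m + 1) j) t := by
        intro t ht
        have hd1 : (Bblk (m + 1) (j + 1)).length - (i' - i) + t
            = i + ((Bblk (m + 1) (j + 1)).length - (i' - i) + t - i) := by omega
        have hd2 : (Bblk (m + 1) (j + 1)).length - (i' - i) + t - i < u.length := by omega
        have s1 := hMi.2 _ hd2
        rw [← hd1] at s1
        have s2 := hMi'.2 _ hd2
        rw [show i' + ((Bblk (m + 1) (j + 1)).length - (i' - i) + t - i)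
            = (Bblk (m + 1) (j + 1)).length + t by omega] at s2
        have s3 : g (Bblk (m + 1 + 1) (j + 1))
            ((Bblk (m + 1) (j + 1)).length - (i' - i) + t)
            = g (Bblk (m + 1 + 1) (j + 1)) ((Bblk (m + 1) (j + 1)).length + t) := by
          rw [s1, s2]
        rw [hsplit] at s3
        rw [g_append_left _ _ (by omega)] at s3
        rw [g_append_right _ _ (by omega)] at s3
        rw [show (Bblk (m + 1) (j + 1)).length + t - (Bblk (m + 1) (j + 1)).length
            = t by omega] at s3
        exact s3
      have := sync_shift m j hj1 (by omega) (i' - i) hp1 hp2 key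
      omega

end FirstApp

open FirstApp in
/-- If a word appears for the first time in `B(n₀,k₀)`, it occurs at most twice. -/
theorem first_appearance_at_most_twice (u : List Bool) (n₀ k₀ : ℕ)
    (hn₀ : 1 ≤ n₀) (hk₀ : k₀ ≤ n₀) (hu : u <:+: Bblk n₀ k₀)
    (hfirst : ∀ n k, 1 ≤ n → k ≤ n → (n, k) ≠ (n₀, k₀) →
      k ≤ k₀ → n - k ≤ n₀ - k₀ → ¬ u <:+: Bblk n k) :
    occ u (Bblk n₀ k₀) = 1 ∨ occ u (Bblk n₀ k₀) = 2 := by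
  have single : ∀ (x : Bool), u <:+: [x] → u = [] ∨ u = [x] := by
    intro x h
    obtain ⟨s, t, hst⟩ := h
    have hlen := congrArg List.length hst
    simp only [List.length_append, List.length_cons, List.length_nil] at hlen
    rcases Nat.eq_zero_or_pos u.length with h0 | h1
    · exact Or.inl (List.length_eq_zero_iff.1 h0)
    · right
      have hs : s = [] := List.length_eq_zero_iff.1 (by omega)
      have ht : t = [] := List.length_eq_zero_iff.1 (by omega)
      subst hs; subst ht
      simpa using hst
  rcases Nat.eq_zero_or_pos k₀ with hk0 | hk1
  · -- k₀ = 0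
    subst hk0
    obtain ⟨N, rfl⟩ : ∃ N, n₀ = N + 1 := ⟨n₀ - 1, by omega⟩
    rcases Nat.eq_zero_or_pos N with hN0 | hN1
    · subst hN0
      rcases single false (by rwa [Bblk_zero] at hu) with h | h <;> subst h
      · right; decide
      · left; decide
    · exfalso
      have hne : ((1 : ℕ), (0 : ℕ)) ≠ (N + 1, 0) := by
        intro hh; rw [Prod.mk.injEq] at hh; omega
      have hni := hfirst 1 0 (le_refl 1) (by omega) hne (le_refl 0) (by omega)
      rw [show Bblk 1 0 = [false] from rfl] at hni
      rw [Bblk_zero] at hu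
      exact hni hu
  · rcases eq_or_lt_of_le hk₀ with he | hlt
    · -- k₀ = n₀
      subst he
      rcases Nat.eq_zero_or_pos (k₀ - 1) with hN0 | hN1
      · have hk1' : k₀ = 1 := by omega
        subst hk1'
        rcases single true (by rwa [Bblk_diag] at hu) with h | h <;> subst h
        · right; decide
        · left; decide
      · exfalso
        have hne : ((1 : ℕ), (1 : ℕ)) ≠ (k₀, k₀) := by
          intro hh; rw [Prod.mk.injEq] at hh; omega
        have hni := hfirst 1 1 (le_refl 1) (le_refl 1) hne (by omega) (by omega)
        rw [show Bblk 1 1 = [true] from rfl] at hni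
        rw [Bblk_diag] at hu
        exact hni hu
    · -- interior case
      obtain ⟨j, rfl⟩ : ∃ j, k₀ = j + 1 := ⟨k₀ - 1, by omega⟩
      obtain ⟨N, rfl⟩ : ∃ N, n₀ = N + 1 := ⟨n₀ - 1, by omega⟩
      have hjN : j + 1 ≤ N := by omega
      have hL : ¬ u <:+: Bblk N (j + 1) := by
        refine hfirst N (j + 1) (by omega) (by omega) ?_ (le_refl _) (by omega)
        intro hh; rw [Prod.mk.injEq] at hh; omega
      have hR : ¬ u <:+: Bblk N j := by
        refine hfirst N j (by omega) (by omega) ?_ (by omega) (by omega)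
        intro hh; rw [Prod.mk.injEq] at hh; omega
      obtain ⟨c, hc1, hkey⟩ := two_occ N j hjN u hL hR
      have hocc : occ u (Bblk (N + 1) (j + 1))
          = ((Finset.range ((Bblk (N + 1) (j + 1)).length - u.length + 1)).filter
            (fun i => ((Bblk (N + 1) (j + 1)).drop i).take u.length = u)).card := rfl
      rw [hocc]
      obtain ⟨i0, hM0⟩ := infix_iff_M.1 hu
      have hcard1 : 1 ≤ ((Finset.range ((Bblk (N + 1) (j + 1)).length - u.length + 1)).filter
            (fun i => ((Bblk (N + 1) (j + 1)).drop i).take u.length = u)).card :=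
        Finset.card_pos.2 ⟨i0, mem_occ_iff.2 hM0⟩
      have hcard2 : ((Finset.range ((Bblk (N + 1) (j + 1)).length - u.length + 1)).filter
            (fun i => ((Bblk (N + 1) (j + 1)).drop i).take u.length = u)).card ≤ 2 := by
        by_contra hgt
        push_neg at hgt
        rw [Finset.two_lt_card] at hgt
        obtain ⟨a, ha, b, hb, d, hd, hab, had, hbd⟩ := hgt
        have hMa := mem_occ_iff.1 ha
        have hMb := mem_occ_iff.1 hb
        have hMd := mem_occ_iff.1 hd
        have pair : ∀ x y, M u (Bblk (N + 1) (j + 1)) x → M u (Bblk (N + 1) (j + 1)) y →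
            x ≠ y → (x = y + c ∨ y = x + c) := by
          intro x y hx hy hne
          rcases Nat.lt_trichotomy x y with h | h | h
          · exact Or.inr (hkey x y hx hy h)
          · exact absurd h hne
          · exact Or.inl (hkey y x hy hx h)
        have p1 := pair a b hMa hMb hab
        have p2 := pair a d hMa hMd had
        have p3 := pair b d hMb hMd hbd
        omega
      omega
end

section
/- (Occurrence counts, pure power case) Let i₀, j₀ ≥ 1 and let u = a^{i₀} b^{j₀} be the word of i₀ letters a followed by j₀ letters b. Set n₀ = i₀ + j₀ + 2 and k₀ = j₀ + 1. Then for all integers i ≥ 0 and 0 ≤ j ≤ i, the number of occurrences of u in B(n₀+i, k₀+j) equals C(i+2, j+1) − 1. -/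
lemma Bblk_self (n : ℕ) : Bblk n n = [true] := by
  cases n with
  | zero => rfl
  | succ m => simp [Bblk]

lemma Bblk_zero (n : ℕ) (h : 1 ≤ n) : Bblk n 0 = [false] := by
  cases n with
  | zero => omega
  | succ m => rfl

lemma Bblk_rec (n k : ℕ) (h1 : 1 ≤ k) (h2 : k < n) :
    Bblk n k = Bblk (n - 1) k ++ Bblk (n - 1) (k - 1) := by
  cases n with
  | zero => omega
  | succ m =>
      cases k with
      | zero => omega
      | succ j =>
          have : j + 1 ≠ m + 1 := by omega
          simp [Bblk, this, show j ≠ m by omega]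

lemma Bblk_pfx (n k : ℕ) (h1 : 1 ≤ k) (h2 : k < n) :
    ∃ q, Bblk n k = List.replicate k true ++ false :: q := by
  induction n generalizing k with
  | zero => omega
  | succ m ih =>
      rw [Bblk_rec (m+1) k h1 (by omega)]
      simp only [Nat.add_sub_cancel]
      by_cases hk : k < m
      · obtain ⟨q, hq⟩ := ih k h1 hk
        exact ⟨q ++ Bblk m (k - 1), by rw [hq]; simp⟩
      · have hkm : k = m := by omega
        subst hkm
        rw [Bblk_self]
        by_cases hm : 1 ≤ k - 1
        · obtain ⟨q, hq⟩ := ih (k - 1) hm (by omega)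
          refine ⟨q, ?_⟩
          rw [hq]
          have : k = (k - 1) + 1 := by omega
          rw [this, List.replicate_succ]
          simp
        · have : k = 1 := by omega
          subst this
          exact ⟨[], by simp [Bblk_zero, List.replicate_succ]⟩

lemma Bblk_sfx (n k : ℕ) (h1 : 1 ≤ k) (h2 : k < n) :
    ∃ p, Bblk n k = p ++ true :: List.replicate (n - k) false := by
  induction n generalizing k with
  | zero => omega
  | succ m ih =>
      rw [Bblk_rec (m+1) k h1 (by omega)]
      simp only [Nat.add_sub_cancel]
      by_cases hk : 1 ≤ k - 1
      · obtain ⟨p, hp⟩ := ih (k - 1) hk (by omega)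
        refine ⟨Bblk m k ++ p, ?_⟩
        rw [hp]
        have : m - (k - 1) = m + 1 - k := by omega
        rw [this]
        simp
      · have hk1 : k = 1 := by omega
        subst hk1
        rw [Bblk_zero m (by omega)]
        by_cases hm : 1 < m
        · obtain ⟨p, hp⟩ := ih 1 (by omega) hm
          refine ⟨p, ?_⟩
          rw [hp]
          have h3 : m + 1 - 1 = (m - 1) + 1 := by omega
          rw [h3, List.replicate_succ']
          simp
        · have : m = 1 := by omega
          subst this
          exact ⟨[], by simp [Bblk_self, List.replicate_succ]⟩

section Aux

lemma tails_eq_map_drop (w : List Bool) :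
    w.tails = (List.range (w.length + 1)).map (fun i => w.drop i) := by
  induction w with
  | nil => simp
  | cons a l ih =>
      rw [List.tails_cons, List.length_cons, List.range_succ_eq_map, List.map_cons, ih]
      simp [List.map_map, Function.comp_def]

lemma card_filter_range (N : ℕ) (p : ℕ → Prop) [DecidablePred p] :
    ((Finset.range N).filter p).card = (List.range N).countP (fun i => decide (p i)) := by
  simp [Finset.card, Finset.filter, Finset.range, List.countP_eq_length_filter,
    Multiset.range, Multiset.filter_coe]

lemma occ_eq (u w : List Bool) (hu : u ≠ []) :
    occ u w = w.tails.countP (fun t => u.isPrefixOf t) := by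
  have hu1 : 1 ≤ u.length := List.length_pos_iff.2 hu
  rw [tails_eq_map_drop, List.countP_map, occ, card_filter_range]
  have hN : w.length + 1 = (w.length - u.length + 1) + min u.length w.length := by omega
  conv_rhs => rw [hN, List.range_add, List.countP_append]
  have h2 : (List.countP ((fun t => u.isPrefixOf t) ∘ fun i => w.drop i)
      (List.map (fun x => w.length - u.length + 1 + x) (List.range (min u.length w.length)))) = 0 := by
    rw [List.countP_eq_zero]
    intro a ha
    simp only [List.mem_map, List.mem_range] at ha
    obtain ⟨m, hm, rfl⟩ := ha
    simp only [Function.comp_apply, List.isPrefixOf_iff_prefix]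
    intro hpre
    have := hpre.length_le
    rw [List.length_drop] at this
    omega
  rw [h2, Nat.add_zero]
  apply List.countP_congr
  intro i _
  simp only [Function.comp_apply, List.isPrefixOf_iff_prefix, decide_eq_true_eq]
  rw [List.prefix_iff_eq_take]
  exact ⟨fun h => h.symm, fun h => h.symm⟩

/-- straddle count -/
def str (u x y : List Bool) : ℕ :=
  x.tails.countP (fun t => decide (t.length < u.length) && u.isPrefixOf (t ++ y))

lemma countP_eq_add {α : Type} (l : List α) (p q r : α → Bool)
    (h : ∀ a ∈ l, (p a = true ↔ (q a = true ∨ r a = true)) ∧ ¬(q a = true ∧ r a = true)) :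
    l.countP p = l.countP q + l.countP r := by
  induction l with
  | nil => simp
  | cons a l ih =>
      have ha := h a (List.mem_cons_self)
      have ih' := ih (fun b hb => h b (List.mem_cons_of_mem a hb))
      simp only [List.countP_cons, ih']
      by_cases hq : q a = true <;> by_cases hr : r a = true <;>
        simp_all <;> omega

lemma occ_append (u x y : List Bool) (hu : u ≠ []) :
    occ u (x ++ y) + (if u <+: y then 1 else 0) = occ u x + occ u y + str u x y := by
  have hy : List.countP (fun t => u.isPrefixOf t) y.tails
      = (if u <+: y then 1 else 0) + List.countP (fun t => u.isPrefixOf t) y.tails.tail := by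
    cases y with
    | nil => simp [List.isPrefixOf_iff_prefix, List.prefix_nil, hu]
    | cons a l =>
        rw [List.tails_cons]
        simp only [List.countP_cons, List.tail_cons, List.isPrefixOf_iff_prefix]
        by_cases h : u <+: a :: l <;> simp [h] <;> omega
  have hsplit : List.countP (fun t => u.isPrefixOf (t ++ y)) x.tails
      = List.countP (fun t => u.isPrefixOf t) x.tails + str u x y := by
    apply countP_eq_add
    intro t _
    simp only [List.isPrefixOf_iff_prefix, Bool.and_eq_true, decide_eq_true_eq]
    constructor
    · constructor
      · intro hp
        by_cases hl : t.length < u.length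
        · exact Or.inr ⟨hl, hp⟩
        · left
          rw [List.prefix_iff_eq_take] at hp ⊢
          exact hp.trans (List.take_append_of_le_length (by omega))
      · rintro (h | ⟨_, h⟩)
        · exact h.trans (List.prefix_append t y)
        · exact h
    · rintro ⟨h1, h2, _⟩
      have := h1.length_le
      omega
  rw [occ_eq u _ hu, occ_eq u x hu, occ_eq u y hu, List.tails_append,
    List.countP_append, List.countP_map, hy]
  have : ((fun t => u.isPrefixOf t) ∘ fun l => l ++ y) = (fun t => u.isPrefixOf (t ++ y)) := rfl
  rw [this, hsplit]
  omega

lemma occ_short (u w : List Bool) (h : w.length < u.length) : occ u w = 0 := by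
  rw [occ, Finset.card_eq_zero, Finset.filter_eq_empty_iff]
  intro i _
  intro hc
  have := congrArg List.length hc
  simp only [List.length_take, List.length_drop] at this
  omega

lemma tails_nodup (l : List Bool) : l.tails.Nodup := by
  induction l with
  | nil => simp
  | cons a l ih =>
      rw [List.tails_cons, List.nodup_cons]
      refine ⟨fun hmem => ?_, ih⟩
      have := (List.mem_tails _ _).1 hmem
      have := this.length_le
      simp at this

lemma countP_eq_one_of_nodup {α : Type} (l : List α) (hl : l.Nodup) (v : α) (hv : v ∈ l)
    (p : α → Bool) (h : ∀ a ∈ l, p a = true ↔ a = v) : l.countP p = 1 := by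
  induction l with
  | nil => simp at hv
  | cons a l ih =>
      rw [List.nodup_cons] at hl
      rw [List.countP_cons]
      by_cases hav : a = v
      · subst hav
        have hpa : p a = true := (h a (List.mem_cons_self)).2 rfl
        have hz : l.countP p = 0 := List.countP_eq_zero.2 (fun b hb hpb => by
          have hbv := (h b (List.mem_cons_of_mem _ hb)).1 hpb
          subst hbv
          exact absurd hb hl.1)
        simp [hpa, hz]
      · have hv' : v ∈ l := by
          rcases List.mem_cons.1 hv with h1 | h1
          · exact absurd h1.symm hav
          · exact h1
        have hpa : ¬ p a = true := fun hpa => hav ((h a (List.mem_cons_self)).1 hpa)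
        rw [ih hl.2 hv' (fun b hb => h b (List.mem_cons_of_mem _ hb))]
        simp [hpa]

end Aux

section UWord
variable (i₀ j₀ : ℕ)

def U (i₀ j₀ : ℕ) : List Bool := List.replicate i₀ false ++ List.replicate j₀ true

lemma U_def : U i₀ j₀ = List.replicate i₀ false ++ List.replicate j₀ true := rfl

lemma U_len : (U i₀ j₀).length = i₀ + j₀ := by simp [U]

lemma U_ne (h : 1 ≤ i₀) : U i₀ j₀ ≠ [] := by
  intro hc
  have := congrArg List.length hc
  rw [U_len] at this
  simp at this
  omega

lemma U_cons (h : 1 ≤ i₀) :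
    U i₀ j₀ = false :: (List.replicate (i₀ - 1) false ++ List.replicate j₀ true) := by
  rw [U_def]
  have : i₀ = (i₀ - 1) + 1 := by omega
  rw [this, List.replicate_succ]
  simp

lemma U_not_prefix_T (h : 1 ≤ i₀) (s : List Bool) : ¬ U i₀ j₀ <+: true :: s := by
  rw [U_cons i₀ j₀ h, List.cons_prefix_cons]
  rintro ⟨hc, -⟩
  exact Bool.false_ne_true hc

/-- Key claim: characterization of straddle suffixes. -/
lemma straddle_key (hi₀ : 1 ≤ i₀) (hj₀ : 1 ≤ j₀) (p q : List Bool) (A B : ℕ)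
    (hA : 1 ≤ A) (hB : 1 ≤ B) (t : List Bool)
    (ht : t <:+ (p ++ true :: List.replicate A false))
    (hlen : t.length < (U i₀ j₀).length)
    (hpre : U i₀ j₀ <+: t ++ (List.replicate B true ++ false :: q)) :
    t = List.replicate i₀ false ∧ i₀ ≤ A ∧ j₀ ≤ B := by
  have hulen : (U i₀ j₀).length = i₀ + j₀ := U_len i₀ j₀
  have htu : t <+: U i₀ j₀ := by
    rcases List.prefix_or_prefix_of_prefix (List.prefix_append t _) hpre with h | h
    · exact h
    · have := h.length_le
      omega
  have htake : t = List.take t.length (U i₀ j₀) := List.prefix_iff_eq_take.1 htu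
  have hle : t.length ≤ i₀ := by
    by_contra hlt
    push_neg at hlt
    have ht2 : t = (List.replicate i₀ false ++ List.replicate (t.length - i₀ - 1) true)
        ++ [true] := by
      conv_lhs => rw [htake, U_def]
      rw [List.take_append, List.take_replicate, List.take_replicate,
        List.length_replicate]
      rw [show t.length ⊓ i₀ = i₀ by omega, show (t.length - i₀) ⊓ j₀ = t.length - i₀ by omega]
      rw [show t.length - i₀ = (t.length - i₀ - 1) + 1 by omega, List.replicate_succ']
      simp
    obtain ⟨s, hs⟩ := ht
    have hx2 : p ++ true :: List.replicate A false
        = (p ++ true :: List.replicate (A - 1) false) ++ [false] := by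
      conv_lhs => rw [show A = (A - 1) + 1 by omega, List.replicate_succ']
      simp
    rw [ht2, hx2, ← List.append_assoc] at hs
    have hlens : (s ++ (List.replicate i₀ false ++ List.replicate (t.length - i₀ - 1) true)).length
        = (p ++ true :: List.replicate (A - 1) false).length := by
      have := congrArg List.length hs
      simp at this ⊢
      omega
    have := List.append_inj_right hs hlens
    simp at this
  have ht3 : t = List.replicate t.length false := by
    conv_lhs => rw [htake, U_def]
    rw [List.take_append_of_le_length (by simpa using hle), List.take_replicate]
    rw [show t.length ⊓ i₀ = t.length by omega]
  have hrest : List.replicate (i₀ - t.length) false ++ List.replicate j₀ true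
      <+: List.replicate B true ++ false :: q := by
    have hu2 : U i₀ j₀ = List.replicate t.length false
        ++ (List.replicate (i₀ - t.length) false ++ List.replicate j₀ true) := by
      rw [U_def, ← List.append_assoc, ← List.replicate_add,
        show t.length + (i₀ - t.length) = i₀ by omega]
    rw [hu2, ← ht3] at hpre
    exact (List.prefix_append_right_inj t).1 hpre
  have hti : t.length = i₀ := by
    by_contra hc
    rw [show i₀ - t.length = (i₀ - t.length - 1) + 1 by omega, List.replicate_succ,
      List.cons_append, show B = (B - 1) + 1 by omega, List.replicate_succ,
      List.cons_append, List.cons_prefix_cons] at hrest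
    exact Bool.false_ne_true hrest.1
  have hjB : j₀ ≤ B := by
    by_contra hc
    push_neg at hc
    have h5 : List.replicate j₀ true <+: List.replicate B true ++ false :: q := by
      rw [show i₀ - t.length = 0 by omega] at hrest
      simpa using hrest
    rw [show j₀ = B + (j₀ - B) by omega, List.replicate_add] at h5
    have h7 := (List.prefix_append_right_inj _).1 h5
    rw [show j₀ - B = (j₀ - B - 1) + 1 by omega, List.replicate_succ,
      List.cons_prefix_cons] at h7
    exact Bool.false_ne_true h7.1.symm
  have hiA : i₀ ≤ A := by
    by_contra hc
    push_neg at hc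
    have hTA : true :: List.replicate A false <:+ p ++ true :: List.replicate A false :=
      List.suffix_append p _
    rcases List.suffix_or_suffix_of_suffix hTA ht with h | h
    · have hmem : (true : Bool) ∈ t := h.subset (List.mem_cons_self)
      rw [ht3, List.mem_replicate] at hmem
      exact Bool.false_ne_true hmem.2.symm
    · have hl2 : t.length ≤ A + 1 := by simpa using h.length_le
      have hlen2 : t.length = (true :: List.replicate A false).length := by
        simp
        omega
      have htEq := h.eq_of_length hlen2
      have hmem : (true : Bool) ∈ t := by
        rw [htEq]
        exact List.mem_cons_self
      rw [ht3, List.mem_replicate] at hmem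
      exact Bool.false_ne_true hmem.2.symm
  refine ⟨?_, hiA, hjB⟩
  rw [ht3, hti]

/-- straddle count in the structured case -/
lemma str_structured (hi₀ : 1 ≤ i₀) (hj₀ : 1 ≤ j₀) (p q : List Bool) (A B : ℕ)
    (hA : 1 ≤ A) (hB : 1 ≤ B) :
    str (U i₀ j₀) (p ++ true :: List.replicate A false)
      (List.replicate B true ++ false :: q)
    = if i₀ ≤ A ∧ j₀ ≤ B then 1 else 0 := by
  split_ifs with hcond
  · obtain ⟨hiA, hjB⟩ := hcond
    have hCrep : U i₀ j₀ <+: List.replicate i₀ false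
        ++ (List.replicate B true ++ false :: q) := by
      rw [U_def]
      apply (List.prefix_append_right_inj _).2
      rw [show B = j₀ + (B - j₀) by omega, List.replicate_add, List.append_assoc]
      exact List.prefix_append _ _
    have hmem : List.replicate i₀ false ∈ (p ++ true :: List.replicate A false).tails := by
      rw [List.mem_tails]
      have h1 : List.replicate i₀ false <:+ List.replicate A false := by
        rw [show A = (A - i₀) + i₀ by omega, List.replicate_add]
        exact List.suffix_append _ _
      exact (h1.trans (List.suffix_cons true _)).trans (List.suffix_append p _)
    rw [str]
    apply countP_eq_one_of_nodup _ (tails_nodup _) _ hmem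
    intro t ht
    simp only [Bool.and_eq_true, decide_eq_true_eq, List.isPrefixOf_iff_prefix]
    constructor
    · rintro ⟨h1, h2⟩
      exact (straddle_key i₀ j₀ hi₀ hj₀ p q A B hA hB t ((List.mem_tails _ _).1 ht) h1 h2).1
    · rintro rfl
      refine ⟨?_, hCrep⟩
      rw [U_len]
      simp
      omega
  · rw [str, List.countP_eq_zero]
    intro t ht
    simp only [Bool.and_eq_true, decide_eq_true_eq, List.isPrefixOf_iff_prefix]
    rintro ⟨h1, h2⟩
    have := straddle_key i₀ j₀ hi₀ hj₀ p q A B hA hB t ((List.mem_tails _ _).1 ht) h1 h2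
    exact hcond ⟨this.2.1, this.2.2⟩

/-- occ splits nicely on structured appends -/
lemma occ_split (hi₀ : 1 ≤ i₀) (hj₀ : 1 ≤ j₀) (x y p q : List Bool) (A B : ℕ)
    (hA : 1 ≤ A) (hB : 1 ≤ B)
    (hx : x = p ++ true :: List.replicate A false)
    (hy : y = List.replicate B true ++ false :: q) :
    occ (U i₀ j₀) (x ++ y)
      = occ (U i₀ j₀) x + occ (U i₀ j₀) y + (if i₀ ≤ A ∧ j₀ ≤ B then 1 else 0) := by
  subst hx
  subst hy
  have happ := occ_append (U i₀ j₀) (p ++ true :: List.replicate A false)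
    (List.replicate B true ++ false :: q) (U_ne i₀ j₀ hi₀)
  rw [str_structured i₀ j₀ hi₀ hj₀ p q A B hA hB] at happ
  have hite : ¬ U i₀ j₀ <+: List.replicate B true ++ false :: q := by
    rw [show B = (B - 1) + 1 by omega, List.replicate_succ, List.cons_append]
    exact U_not_prefix_T i₀ j₀ hi₀ _
  rw [if_neg hite] at happ
  omega

lemma occ_append_single_F (hi₀ : 1 ≤ i₀) (hj₀ : 1 ≤ j₀) (x : List Bool) :
    occ (U i₀ j₀) (x ++ [false]) = occ (U i₀ j₀) x := by
  have happ := occ_append (U i₀ j₀) x [false] (U_ne i₀ j₀ hi₀)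
  have h1 : ¬ U i₀ j₀ <+: [false] := by
    intro h
    have := h.length_le
    rw [U_len] at this
    simp at this
    omega
  have h2 : str (U i₀ j₀) x [false] = 0 := by
    rw [str, List.countP_eq_zero]
    intro t ht
    simp only [Bool.and_eq_true, decide_eq_true_eq, List.isPrefixOf_iff_prefix]
    rintro ⟨hl, hp⟩
    have hlen := hp.length_le
    rw [U_len] at hl hlen
    simp at hlen
    have heq : U i₀ j₀ = t ++ [false] := hp.eq_of_length (by rw [U_len]; simp; omega)
    have hu2 : U i₀ j₀ = (List.replicate i₀ false ++ List.replicate (j₀ - 1) true)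
        ++ [true] := by
      rw [U_def, show j₀ = (j₀ - 1) + 1 by omega, List.replicate_succ']
      simp
    rw [hu2] at heq
    have hll : (List.replicate i₀ false ++ List.replicate (j₀ - 1) true).length
        = t.length := by
      have := congrArg List.length heq
      simp at this
      simp
      omega
    have := List.append_inj_right heq hll
    simp at this
  have h3 : occ (U i₀ j₀) [false] = 0 := occ_short _ _ (by rw [U_len]; simp; omega)
  rw [if_neg h1, h2, h3] at happ
  omega

lemma occ_cons_T (hi₀ : 1 ≤ i₀) (hj₀ : 1 ≤ j₀) (y : List Bool) :
    occ (U i₀ j₀) ([true] ++ y) = occ (U i₀ j₀) y := by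
  have happ := occ_append (U i₀ j₀) [true] y (U_ne i₀ j₀ hi₀)
  have hstr : str (U i₀ j₀) [true] y = if U i₀ j₀ <+: y then 1 else 0 := by
    rw [str, show ([true] : List Bool).tails = [[true], []] from rfl,
      List.countP_cons, List.countP_cons, List.countP_nil]
    have e2 : (decide (([true] : List Bool).length < (U i₀ j₀).length)
        && (U i₀ j₀).isPrefixOf ([true] ++ y)) = false := by
      have hnp : ¬ U i₀ j₀ <+: ([true] ++ y) := U_not_prefix_T i₀ j₀ hi₀ y
      refine Bool.eq_false_iff.mpr (fun hc => ?_)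
      rw [Bool.and_eq_true, List.isPrefixOf_iff_prefix] at hc
      exact hnp hc.2
    rw [e2]
    by_cases h : U i₀ j₀ <+: y
    · have e1 : (decide (([] : List Bool).length < (U i₀ j₀).length)
          && (U i₀ j₀).isPrefixOf ([] ++ y)) = true := by
        rw [Bool.and_eq_true, List.isPrefixOf_iff_prefix]
        refine ⟨decide_eq_true ?_, by simpa using h⟩
        rw [U_len]
        simp
        omega
      rw [e1, if_pos h]
      simp
    · have e1 : (decide (([] : List Bool).length < (U i₀ j₀).length)
          && (U i₀ j₀).isPrefixOf ([] ++ y)) = false := by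
        refine Bool.eq_false_iff.mpr (fun hc => ?_)
        rw [Bool.and_eq_true, List.isPrefixOf_iff_prefix] at hc
        exact h (by simpa using hc.2)
      rw [e1, if_neg h]
      simp
  have h3 : occ (U i₀ j₀) [true] = 0 := occ_short _ _ (by rw [U_len]; simp; omega)
  rw [hstr, h3] at happ
  omega

/-- The zero lemma: no occurrences outside the cone. -/
lemma occ_U_zero (hi₀ : 1 ≤ i₀) (hj₀ : 1 ≤ j₀) :
    ∀ n k, k ≤ n → (n - k ≤ i₀ ∨ k ≤ j₀) → occ (U i₀ j₀) (Bblk n k) = 0 := by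
  intro n
  induction n using Nat.strong_induction_on with
  | _ n ih =>
    intro k hk hcond
    by_cases hk0 : k = 0
    · subst hk0
      cases n with
      | zero =>
          rw [show Bblk 0 0 = [true] from rfl]
          exact occ_short _ _ (by rw [U_len]; simp; omega)
      | succ m =>
          rw [Bblk_zero _ (by omega)]
          exact occ_short _ _ (by rw [U_len]; simp; omega)
    · by_cases hkn : k = n
      · subst hkn
        rw [Bblk_self]
        exact occ_short _ _ (by rw [U_len]; simp; omega)
      · obtain ⟨m, rfl⟩ : ∃ m, n = m + 1 := ⟨n - 1, by omega⟩
        have hrec := Bblk_rec (m + 1) k (by omega) (by omega)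
        rw [Nat.add_sub_cancel] at hrec
        rw [hrec]
        by_cases hk1 : k = 1
        · subst hk1
          rw [show (1 : ℕ) - 1 = 0 from rfl, Bblk_zero m (by omega)]
          rw [occ_append_single_F i₀ j₀ hi₀ hj₀]
          exact ih m (by omega) 1 (by omega) (Or.inr hj₀)
        · by_cases hkm : k = m
          · rw [hkm, Bblk_self, occ_cons_T i₀ j₀ hi₀ hj₀]
            exact ih m (by omega) (m - 1) (by omega) (Or.inl (by omega))
          · have hk2 : 2 ≤ k := by omega
            have hkm2 : k < m := by omega
            obtain ⟨p, hp⟩ := Bblk_sfx m k (by omega) hkm2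
            obtain ⟨q, hq⟩ := Bblk_pfx m (k - 1) (by omega) (by omega)
            rw [occ_split i₀ j₀ hi₀ hj₀ _ _ p q (m - k) (k - 1) (by omega) (by omega) hp hq]
            rw [ih m (by omega) k (by omega) (by omega),
              ih m (by omega) (k - 1) (by omega) (by omega)]
            rw [if_neg (by omega : ¬(i₀ ≤ m - k ∧ j₀ ≤ k - 1))]

/-- Main counting lemma. -/
lemma occ_U_count (hi₀ : 1 ≤ i₀) (hj₀ : 1 ≤ j₀) :
    ∀ i : ℕ, ∀ j ≤ i,
      occ (U i₀ j₀) (Bblk (i₀ + j₀ + 2 + i) (j₀ + 1 + j))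
        = Nat.choose (i + 2) (j + 1) - 1 := by
  intro i
  induction i with
  | zero =>
      intro j hj
      have hj0 : j = 0 := by omega
      subst hj0
      simp only [Nat.add_zero]
      have hrec := Bblk_rec (i₀ + j₀ + 2) (j₀ + 1) (by omega) (by omega)
      rw [show i₀ + j₀ + 2 - 1 = i₀ + j₀ + 1 by omega,
        show j₀ + 1 - 1 = j₀ by omega] at hrec
      rw [hrec]
      obtain ⟨p, hp⟩ := Bblk_sfx (i₀ + j₀ + 1) (j₀ + 1) (by omega) (by omega)
      rw [show i₀ + j₀ + 1 - (j₀ + 1) = i₀ by omega] at hp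
      obtain ⟨q, hq⟩ := Bblk_pfx (i₀ + j₀ + 1) j₀ (by omega) (by omega)
      rw [occ_split i₀ j₀ hi₀ hj₀ _ _ p q i₀ j₀ hi₀ hj₀ hp hq]
      rw [occ_U_zero i₀ j₀ hi₀ hj₀ (i₀ + j₀ + 1) (j₀ + 1) (by omega) (Or.inl (by omega))]
      rw [occ_U_zero i₀ j₀ hi₀ hj₀ (i₀ + j₀ + 1) j₀ (by omega) (Or.inr (by omega))]
      rw [if_pos ⟨le_rfl, le_rfl⟩]
      rfl
  | succ i ih =>
      intro j hj
      have hrec := Bblk_rec (i₀ + j₀ + 2 + (i + 1)) (j₀ + 1 + j) (by omega) (by omega)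
      rw [show i₀ + j₀ + 2 + (i + 1) - 1 = i₀ + j₀ + 2 + i by omega,
        show j₀ + 1 + j - 1 = j₀ + j by omega] at hrec
      rw [hrec]
      obtain ⟨p, hp⟩ := Bblk_sfx (i₀ + j₀ + 2 + i) (j₀ + 1 + j) (by omega) (by omega)
      obtain ⟨q, hq⟩ := Bblk_pfx (i₀ + j₀ + 2 + i) (j₀ + j) (by omega) (by omega)
      rw [occ_split i₀ j₀ hi₀ hj₀ _ _ p q (i₀ + j₀ + 2 + i - (j₀ + 1 + j)) (j₀ + j)
        (by omega) (by omega) hp hq]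
      rw [if_pos ⟨by omega, by omega⟩]
      have hx : occ (U i₀ j₀) (Bblk (i₀ + j₀ + 2 + i) (j₀ + 1 + j))
          = Nat.choose (i + 2) (j + 1) - 1 := by
        by_cases hji : j ≤ i
        · exact ih j hji
        · have hj2 : j = i + 1 := by omega
          subst hj2
          rw [occ_U_zero i₀ j₀ hi₀ hj₀ (i₀ + j₀ + 2 + i) (j₀ + 1 + (i + 1)) (by omega)
            (Or.inl (by omega))]
          rw [show i + 1 + 1 = i + 2 by omega, Nat.choose_self]
      have hy : occ (U i₀ j₀) (Bblk (i₀ + j₀ + 2 + i) (j₀ + j))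
          = Nat.choose (i + 2) j - 1 := by
        cases j with
        | zero =>
            rw [occ_U_zero i₀ j₀ hi₀ hj₀ (i₀ + j₀ + 2 + i) (j₀ + 0) (by omega)
              (Or.inr (by omega))]
            simp
        | succ j' =>
            have := ih j' (by omega)
            rw [show j₀ + (j' + 1) = j₀ + 1 + j' by omega]
            exact this
      rw [hx, hy]
      have hcs : Nat.choose (i + 1 + 2) (j + 1)
          = Nat.choose (i + 2) j + Nat.choose (i + 2) (j + 1) := by
        rw [show i + 1 + 2 = (i + 2) + 1 by omega]
        exact Nat.choose_succ_succ _ _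
      have hp1 : 1 ≤ Nat.choose (i + 2) j := Nat.choose_pos (by omega)
      have hp2 : 1 ≤ Nat.choose (i + 2) (j + 1) := Nat.choose_pos (by omega)
      omega

end UWord

/-- Occurrence counts in the pure power case: for `u = a^{i₀} b^{j₀}`,
`n₀ = i₀ + j₀ + 2`, `k₀ = j₀ + 1`, the number of occurrences of `u` in
`B(n₀+i, k₀+j)` is `C(i+2, j+1) − 1` for all `0 ≤ j ≤ i`. -/
theorem occurrences_pure_power (i₀ j₀ : ℕ) (hi₀ : 1 ≤ i₀) (hj₀ : 1 ≤ j₀) :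
    ∀ i : ℕ, ∀ j ≤ i,
      occ (List.replicate i₀ false ++ List.replicate j₀ true)
          (Bblk (i₀ + j₀ + 2 + i) (j₀ + 1 + j))
        = Nat.choose (i + 2) (j + 1) - 1 :=
  occ_U_count i₀ j₀ hi₀ hj₀
end

section
/- (Ratio limit of binomial coefficients) Let α ∈ (0,1), let r, s be natural numbers with s ≤ r, and let (k_n) be a sequence of natural numbers with k_n ≤ n for all n and k_n/n → α as n → ∞. Then the quotient C(n−r, k_n−s) / C(n, k_n) (real division of binomial coefficients, subtraction in ℕ, which is well-defined for all large n since 0 < α < 1) converges to α^s (1−α)^{r−s} as n → ∞. -/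
/-!
Whenever `s ≤ k` and `r - s ≤ n - k`, the ratio `C(n-r, k-s) / C(n, k)` equals the quotient of
descending factorials `k^(s) (n-k)^(r-s) / n^(r)`. Dividing numerator and denominator by `n^r`,
each of the three factors is a product of finitely many terms `(m - i)/n` whose limits are `α`,
`1 - α` and `1` respectively.
-/

open Filter Topology
open scoped Nat

theorem Nat.cast_choose_sub_div_choose {n k s t : ℕ} (hk : k ≤ n) (hs : s ≤ k) (ht : t ≤ n - k) :
    (Nat.choose (n - (s + t)) (k - s) : ℝ) / Nat.choose n k =
      k.descFactorial s * (n - k).descFactorial t / n.descFactorial (s + t) := by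
  have hst : s + t ≤ n := by omega
  have hsub : n - (s + t) - (k - s) = n - k - t := by omega
  have descFactorial_eq {m j : ℕ} (h : j ≤ m) :
      (m.descFactorial j : ℝ) = m ! / (m - j)! := by
    rw [eq_div_iff (by positivity), mul_comm]
    exact_mod_cast Nat.factorial_mul_descFactorial h
  rw [Nat.cast_choose ℝ (by omega : k - s ≤ n - (s + t)), Nat.cast_choose ℝ hk, hsub,
    descFactorial_eq hs, descFactorial_eq ht, descFactorial_eq hst]
  field_simp

section DivNat

variable {a : ℕ → ℕ} {β : ℝ}

theorem tendsto_cast_sub_div_natCast (ha : Tendsto (fun n ↦ (a n : ℝ) / n) atTop (𝓝 β)) (j : ℕ) :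
    Tendsto (fun n ↦ ((a n - j : ℕ) : ℝ) / n) atTop (𝓝 β) := by
  have hlower : Tendsto (fun n : ℕ ↦ (a n : ℝ) / n - j / n) atTop (𝓝 β) := by
    simpa using ha.sub (tendsto_const_div_atTop_nhds_zero_nat (j : ℝ))
  refine tendsto_of_tendsto_of_tendsto_of_le_of_le hlower ha (fun n ↦ ?_) (fun n ↦ ?_)
  · rw [← sub_div]
    have : (a n : ℝ) ≤ ((a n - j : ℕ) : ℝ) + j := by exact_mod_cast le_tsub_add
    exact div_le_div_of_nonneg_right (by linarith) n.cast_nonneg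
  · exact div_le_div_of_nonneg_right (Nat.cast_le.mpr (Nat.sub_le _ _)) n.cast_nonneg

theorem tendsto_descFactorial_div_pow (ha : Tendsto (fun n ↦ (a n : ℝ) / n) atTop (𝓝 β))
    (j : ℕ) : Tendsto (fun n ↦ ((a n).descFactorial j : ℝ) / (n : ℝ) ^ j) atTop (𝓝 (β ^ j)) := by
  induction j with
  | zero => simp
  | succ j ih =>
    convert (tendsto_cast_sub_div_natCast ha j).mul ih using 1
    · ext n
      rw [Nat.descFactorial_succ, Nat.cast_mul, pow_succ', mul_div_mul_comm]
    · rw [pow_succ']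

theorem tendsto_atTop_of_tendsto_div_natCast (ha : Tendsto (fun n ↦ (a n : ℝ) / n) atTop (𝓝 β))
    (hβ : 0 < β) : Tendsto a atTop atTop := by
  have hprod : Tendsto (fun n : ℕ ↦ (a n : ℝ) / n * n) atTop atTop :=
    ha.pos_mul_atTop hβ tendsto_natCast_atTop_atTop
  refine tendsto_natCast_atTop_iff.mp (hprod.congr' ?_)
  filter_upwards [eventually_ne_atTop 0] with n hn
  exact div_mul_cancel₀ _ (Nat.cast_ne_zero.mpr hn)

theorem tendsto_sub_div_natCast (ha : Tendsto (fun n ↦ (a n : ℝ) / n) atTop (𝓝 β))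
    (hle : ∀ n, a n ≤ n) : Tendsto (fun n ↦ ((n - a n : ℕ) : ℝ) / n) atTop (𝓝 (1 - β)) := by
  refine (tendsto_const_nhds.sub ha).congr' ?_
  filter_upwards [eventually_ne_atTop 0] with n hn
  rw [Nat.cast_sub (hle n), sub_div, div_self (Nat.cast_ne_zero.mpr hn)]

end DivNat

theorem tendsto_natCast_div_self : Tendsto (fun n : ℕ ↦ (n : ℝ) / n) atTop (𝓝 1) := by
  refine tendsto_const_nhds.congr' ?_
  filter_upwards [eventually_ne_atTop 0] with n hn
  exact (div_self (Nat.cast_ne_zero.mpr hn)).symm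

/-- Ratio limit of binomial coefficients: if `kₙ/n → α ∈ (0,1)` and `s ≤ r`,
then `C(n−r, kₙ−s) / C(n, kₙ) → α^s (1−α)^{r−s}`. -/
theorem binomial_ratio_limit (α : ℝ) (hα0 : 0 < α) (hα1 : α < 1)
    (r s : ℕ) (hsr : s ≤ r) (k : ℕ → ℕ) (hk : ∀ n, k n ≤ n)
    (hlim : Tendsto (fun n : ℕ => (k n : ℝ) / (n : ℝ)) atTop (nhds α)) :
    Tendsto (fun n : ℕ => (Nat.choose (n - r) (k n - s) : ℝ) / (Nat.choose n (k n) : ℝ))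
      atTop (nhds (α ^ s * (1 - α) ^ (r - s))) := by
  obtain ⟨t, rfl⟩ := Nat.exists_eq_add_of_le hsr
  rw [Nat.add_sub_cancel_left]
  have hcompl := tendsto_sub_div_natCast hlim hk
  have hlimit := ((tendsto_descFactorial_div_pow hlim s).mul
    (tendsto_descFactorial_div_pow hcompl t)).div
    (tendsto_descFactorial_div_pow tendsto_natCast_div_self (s + t)) (by simp)
  rw [one_pow, div_one] at hlimit
  refine hlimit.congr' ?_
  filter_upwards [(tendsto_atTop_of_tendsto_div_natCast hlim hα0).eventually_ge_atTop s,
    (tendsto_atTop_of_tendsto_div_natCast hcompl (sub_pos.mpr hα1)).eventually_ge_atTop t,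
    eventually_ne_atTop 0] with n hs ht hn
  rw [Pi.div_apply, Nat.cast_choose_sub_div_choose (hk n) hs ht, pow_add]
  field_simp
end

section
/- (Continuity of eigenfunctions at doubly transitive points) Let (X,d) be a compact metric space, T : X → X a homeomorphism, λ ∈ ℂ, and f : X → ℂ a function such that f(T x) = λ · f(x) for every x ∈ X and such that f is continuous at at least one point of X. If x ∈ X has dense forward orbit {Tⁿ x : n ≥ 0} and dense backward orbit {T⁻ⁿ x : n ≥ 0}, then f is continuous at x. -/
/-!
Continuity at `x` means zero oscillation there. The points where `osc f < ε` form an open set,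
nonempty because `f` is continuous somewhere, so both orbits of `x` enter it. If `‖λ‖ ≤ 1`, then
`f = λⁿ • f ∘ T⁻ⁿ` gives `osc f x ≤ osc f (T⁻ⁿ x)`; if `‖λ‖ ≥ 1`, then `f = λ⁻ⁿ • f ∘ Tⁿ` gives
`osc f x ≤ osc f (Tⁿ x)`. Either way `osc f x < ε` for every `ε > 0`.
-/

open Filter Topology Metric

section Oscillation

variable {X Y F G : Type*} [TopologicalSpace X] [TopologicalSpace Y]
  [PseudoEMetricSpace F] [PseudoEMetricSpace G]

theorem isOpen_setOf_oscillation_lt (f : X → F) (ε : ENNReal) :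
    IsOpen {x | oscillation f x < ε} := by
  refine isOpen_iff_mem_nhds.2 fun x hx => ?_
  obtain ⟨S, hS, hSε⟩ : ∃ S ∈ (𝓝 x).map f, ediam S < ε := by
    simpa only [Set.mem_ofPred_eq, oscillation, iInf_lt_iff, exists_prop] using hx
  filter_upwards [eventually_mem_nhds_iff.2 hS] with y hy
  exact (biInf_le ediam (show S ∈ (𝓝 y).map f from hy)).trans_lt hSε

theorem oscillation_le_of_edist_le {f : X → F} {g : Y → G} {φ : X → Y} {x : X}
    (hφ : ContinuousAt φ x) (h : ∀ y y', edist (f y) (f y') ≤ edist (g (φ y)) (g (φ y'))) :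
    oscillation f x ≤ oscillation g (φ x) := by
  refine le_iInf₂ fun S hS => ?_
  have hmem : f '' (φ ⁻¹' (g ⁻¹' S)) ∈ (𝓝 x).map f := image_mem_map (hφ hS)
  refine (biInf_le ediam hmem).trans (ediam_image_le_iff.2 fun y hy y' hy' => ?_)
  exact (h y y').trans (edist_le_ediam_of_mem hy hy')

theorem continuousAt_of_dense_oscillation_le {f : X → F} {x z : X} {S : Set X} (hS : Dense S)
    (hle : ∀ y ∈ S, oscillation f x ≤ oscillation f y) (hz : ContinuousAt f z) :
    ContinuousAt f x := by
  rw [← Oscillation.eq_zero_iff_continuousAt]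
  by_contra hne
  obtain ⟨y, hyS, hy⟩ := hS.exists_mem_open (isOpen_setOf_oscillation_lt f (oscillation f x))
    ⟨z, by simpa [hz.oscillation_eq_zero] using pos_iff_ne_zero.2 hne⟩
  exact (hle y hyS).not_gt hy

end Oscillation

theorem apply_iterate_of_apply_eq_smul {M X E : Type*} [Monoid M] [MulAction M E] {f : X → E}
    {T : X → X} {c : M} (h : ∀ y, f (T y) = c • f y) (n : ℕ) (y : X) :
    f (T^[n] y) = c ^ n • f y :=
  (Function.Semiconj.iterate_right h n y).trans (congrFun (smul_iterate c n) (f y))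

section Eigenfunction

variable {𝕜 X Y E : Type*} [NormedField 𝕜] [TopologicalSpace X] [TopologicalSpace Y]
  [SeminormedAddCommGroup E] [NormedSpace 𝕜 E] {f : X → E} {c : 𝕜}

theorem oscillation_le_of_eq_smul_comp {g : Y → E} {φ : X → Y} {x : X} (hφ : ContinuousAt φ x)
    (hc : ‖c‖ ≤ 1) (h : ∀ y, f y = c • g (φ y)) : oscillation f x ≤ oscillation g (φ x) :=
  oscillation_le_of_edist_le hφ fun y y' => by
    rw [h, h, edist_smul₀, ENNReal.smul_def, smul_eq_mul]
    exact mul_le_of_le_one_left bot_le (by exact_mod_cast hc)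

theorem oscillation_le_oscillation_iterate {T : X → X} (hT : Continuous T)
    (h : ∀ y, f (T y) = c • f y) (hc : 1 ≤ ‖c‖) (n : ℕ) (x : X) :
    oscillation f x ≤ oscillation f (T^[n] x) := by
  have hc₀ : c ≠ 0 := norm_pos_iff.1 (zero_lt_one.trans_le hc)
  refine oscillation_le_of_eq_smul_comp (c := c⁻¹ ^ n) (hT.iterate n).continuousAt ?_ fun y => ?_
  · simpa only [norm_pow, norm_inv] using pow_le_one₀ (by positivity) (inv_le_one_of_one_le₀ hc)
  · rw [apply_iterate_of_apply_eq_smul h, smul_smul, ← mul_pow, inv_mul_cancel₀ hc₀, one_pow,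
      one_smul]

theorem oscillation_le_oscillation_symm_iterate (T : X ≃ₜ X) (h : ∀ y, f (T y) = c • f y)
    (hc : ‖c‖ ≤ 1) (n : ℕ) (x : X) : oscillation f x ≤ oscillation f (T.symm^[n] x) := by
  refine oscillation_le_of_eq_smul_comp (c := c ^ n) (T.symm.continuous.iterate n).continuousAt
    ?_ fun y => ?_
  · simpa only [norm_pow] using pow_le_one₀ (norm_nonneg c) hc
  · rw [← apply_iterate_of_apply_eq_smul h, Function.LeftInverse.iterate T.apply_symm_apply]

end Eigenfunction

theorem eigenfunction_continuousAt_of_doubly_transitive_general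
    {X : Type*} [MetricSpace X]
    (T : X ≃ₜ X) (lam : ℂ) (f : X → ℂ)
    (heig : ∀ x : X, f (T x) = lam * f x)
    (hcont : ∃ z : X, ContinuousAt f z)
    (x : X)
    (hfwd : Dense (Set.range fun n : ℕ => (⇑T)^[n] x))
    (hbwd : Dense (Set.range fun n : ℕ => (⇑T.symm)^[n] x)) :
    ContinuousAt f x := by
  obtain ⟨z, hz⟩ := hcont
  rcases le_total ‖lam‖ 1 with hlam | hlam
  · refine continuousAt_of_dense_oscillation_le hbwd ?_ hz
    rintro _ ⟨n, rfl⟩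
    exact oscillation_le_oscillation_symm_iterate T heig hlam n x
  · refine continuousAt_of_dense_oscillation_le hfwd ?_ hz
    rintro _ ⟨n, rfl⟩
    exact oscillation_le_oscillation_iterate T.continuous heig hlam n x

/-- Continuity of eigenfunctions at doubly transitive points: if `T` is a
homeomorphism of a compact metric space, `f : X → ℂ` satisfies
`f ∘ T = λ · f` everywhere and is continuous at some point, then `f` is
continuous at every point having dense forward and backward orbits. -/
theorem eigenfunction_continuousAt_of_doubly_transitive
    {X : Type*} [MetricSpace X] [CompactSpace X]
    (T : X ≃ₜ X) (lam : ℂ) (f : X → ℂ)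
    (heig : ∀ x : X, f (T x) = lam * f x)
    (hcont : ∃ z : X, ContinuousAt f z)
    (x : X)
    (hfwd : Dense (Set.range fun n : ℕ => (⇑T)^[n] x))
    (hbwd : Dense (Set.range fun n : ℕ => (⇑T.symm)^[n] x)) :
    ContinuousAt f x :=
  eigenfunction_continuousAt_of_doubly_transitive_general T lam f heig hcont x hfwd hbwd
end
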